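/- arXiv:2106.01492 — 4 statements merged into one kernel-verified Lean document; each statement's English description precedes it below -/
import Mathlib

section
/- Let A and B be independent real-valued random variables and c a fixed real constant. Suppose 1 ≤ A ≤ c almost surely, A < B almost surely, P(B > c) > 0, and c·E[B] ≥ E[A]·E[B | B > c]. Then E[min(AB, c) − min(A, c)] / E[min(AB, c) − min(B, c)] ≥ E[AB − A] / E[AB − B]. (In particular, since A ≤ c, min(A,c) = A.) -/
/-!
Put `a = E A`, `b = E B`, `p = P(B > c)`, `q = E[B; B > c]` and `X = E[(AB - c)⁺]`. Since
`min x c = x - (x - c)⁺` and `A ≤ c`, the truncated numerator and denominator are `ab - a - X` and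
`ab - b - X + (q - cp)`, and cross-multiplying reduces the claim to `X (b - a) ≥ (q - cp) a (b - 1)`.
On `{B > c}` we have `(AB - c)⁺ ≥ AB - c`, so independence gives `X ≥ aq - cp`; with this the
difference of the two sides is at least `(a - 1)(cbp - aq)`, which is nonnegative by hypothesis.
-/

open MeasureTheory ProbabilityTheory

lemma min_eq_sub_max_sub (x c : ℝ) : min x c = x - max (x - c) 0 := by
  rw [← min_sub_sub_left, sub_sub_cancel, sub_zero, min_comm]

lemma abc_ratio_le_of_bounds {a b c p q X : ℝ} (ha : 1 ≤ a) (hab : a ≤ b)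
    (hX : a * q - c * p ≤ X) (hq : a * q ≤ c * b * p)
    (hD₁ : 0 < a * b - b - X + (q - c * p)) (hD₂ : 0 < a * b - b) :
    (a * b - a) / (a * b - b) ≤ (a * b - a - X) / (a * b - b - X + (q - c * p)) := by
  rw [div_le_div_iff₀ hD₂ hD₁]
  nlinarith [mul_le_mul_of_nonneg_right hX (sub_nonneg.2 hab),
    mul_nonneg (sub_nonneg.2 ha) (sub_nonneg.2 hq)]

section
variable {Ω : Type*} [MeasurableSpace Ω] {μ : Measure Ω}

lemma integral_min_sub_min [IsFiniteMeasure μ] {f g : Ω → ℝ} (hf : Integrable f μ)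
    (hg : Integrable g μ) (c : ℝ) :
    ∫ ω, (min (f ω) c - min (g ω) c) ∂μ =
      ∫ ω, (f ω - g ω) ∂μ - ∫ ω, max (f ω - c) 0 ∂μ + ∫ ω, max (g ω - c) 0 ∂μ := by
  have hf' : Integrable (fun ω => max (f ω - c) 0) μ := (hf.sub (integrable_const c)).pos_part
  have hg' : Integrable (fun ω => max (g ω - c) 0) μ := (hg.sub (integrable_const c)).pos_part
  have hfg : Integrable (fun ω => f ω - g ω) μ := hf.sub hg
  simp only [min_eq_sub_max_sub]
  calc _ = ∫ ω, (f ω - g ω - max (f ω - c) 0 + max (g ω - c) 0) ∂μ := by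
        congr 1 with ω; ring
    _ = _ := by rw [integral_add (f := fun ω => f ω - g ω - max (f ω - c) 0) (hfg.sub hf') hg',
      integral_sub hfg hf']

lemma integral_max_sub_zero_eq_setIntegral_sub [IsFiniteMeasure μ] {f : Ω → ℝ}
    (hf : Integrable f μ) (c : ℝ) :
    ∫ ω, max (f ω - c) 0 ∂μ = ∫ ω in {ω | c < f ω}, f ω ∂μ - c * μ.real {ω | c < f ω} := by
  have hS : NullMeasurableSet {ω | c < f ω} μ :=
    nullMeasurableSet_lt aemeasurable_const hf.aemeasurable
  have hmax : (fun ω => max (f ω - c) 0) = {ω | c < f ω}.indicator (fun ω => f ω - c) := by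
    ext ω
    by_cases h : c < f ω <;> simp [h, le_of_lt, not_lt.1]
  rw [hmax, integral_indicator₀ hS, integral_sub hf.integrableOn integrableOn_const,
    setIntegral_const, smul_eq_mul, mul_comm]

lemma setIntegral_le_integral_max_zero {f : Ω → ℝ} (hf : Integrable f μ) (s : Set Ω) :
    ∫ ω in s, f ω ∂μ ≤ ∫ ω, max (f ω) 0 ∂μ :=
  (setIntegral_mono hf.integrableOn hf.pos_part.integrableOn fun _ => le_max_left _ _).trans
    (setIntegral_le_integral hf.pos_part (.of_forall fun _ => le_max_right _ _))

lemma ProbabilityTheory.IndepFun.setIntegral_preimage_mul {A B : Ω → ℝ} (hAB : IndepFun A B μ)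
    (hA : AEStronglyMeasurable A μ) (hB : AEStronglyMeasurable B μ) {T : Set ℝ}
    (hT : MeasurableSet T) :
    ∫ ω in B ⁻¹' T, A ω * B ω ∂μ = (∫ ω, A ω ∂μ) * ∫ ω in B ⁻¹' T, B ω ∂μ := by
  have hS : NullMeasurableSet (B ⁻¹' T) μ := hB.aemeasurable.nullMeasurableSet_preimage hT
  have hind : (B ⁻¹' T).indicator (fun ω => A ω * B ω) = A * (T.indicator id ∘ B) := by
    ext ω
    by_cases h : B ω ∈ T <;> simp [Set.indicator, h]
  have hψ : Measurable (T.indicator id) := measurable_id.indicator hT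
  have hindep : IndepFun A (T.indicator id ∘ B) μ := hAB.comp measurable_id hψ
  rw [← integral_indicator₀ hS, ← integral_indicator₀ hS, hind,
    hindep.integral_mul_eq_mul_integral hA
      (hψ.comp_aemeasurable hB.aemeasurable).aestronglyMeasurable]
  rfl

end

/-- **A-B-c Lemma.** If `A`, `B` are independent integrable random variables with
`1 ≤ A ≤ c` a.s., `A < B` a.s., `P(B > c) > 0`, and `c·E[B] ≥ E[A]·E[B | B > c]`
(where `E[B | B > c] = E[B·1{B>c}] / P(B>c)`), then
`E[min(AB,c) − min(A,c)] / E[min(AB,c) − min(B,c)] ≥ E[AB − A] / E[AB − B]`. -/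
theorem abc_lemma {Ω : Type*} [MeasurableSpace Ω] (μ : Measure Ω) [IsProbabilityMeasure μ]
    (A B : Ω → ℝ) (c : ℝ)
    (hAB : IndepFun A B μ)
    (hA : Integrable A μ) (hB : Integrable B μ) (hABint : Integrable (fun ω => A ω * B ω) μ)
    (hA1 : ∀ᵐ ω ∂μ, 1 ≤ A ω) (hAc : ∀ᵐ ω ∂μ, A ω ≤ c)
    (hAltB : ∀ᵐ ω ∂μ, A ω < B ω)
    (hBc : 0 < (μ {ω | B ω > c}).toReal)
    (hcond : c * ∫ ω, B ω ∂μ ≥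
      (∫ ω, A ω ∂μ) * ((∫ ω in {ω | B ω > c}, B ω ∂μ) / (μ {ω | B ω > c}).toReal))
    (hden1 : 0 < ∫ ω, (min (A ω * B ω) c - min (B ω) c) ∂μ)
    (hden2 : 0 < ∫ ω, (A ω * B ω - B ω) ∂μ) :
    (∫ ω, (min (A ω * B ω) c - min (A ω) c) ∂μ) /
      (∫ ω, (min (A ω * B ω) c - min (B ω) c) ∂μ) ≥
    (∫ ω, (A ω * B ω - A ω) ∂μ) / (∫ ω, (A ω * B ω - B ω) ∂μ) := by
  set a := ∫ ω, A ω ∂μ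
  set b := ∫ ω, B ω ∂μ
  set p := μ.real {ω | c < B ω}
  set q := ∫ ω in {ω | c < B ω}, B ω ∂μ
  set X := ∫ ω, max (A ω * B ω - c) 0 ∂μ
  have hEAB : ∫ ω, A ω * B ω ∂μ = a * b := hAB.integral_mul_eq_mul_integral hA.1 hB.1
  have hN₁ : ∫ ω, (min (A ω * B ω) c - min (A ω) c) ∂μ = a * b - a - X := by
    have hA_trunc : ∫ ω, max (A ω - c) 0 ∂μ = 0 :=
      integral_eq_zero_of_ae (hAc.mono fun ω h => max_eq_right (sub_nonpos.2 h))
    rw [integral_min_sub_min hABint hA, hA_trunc, integral_sub hABint hA, hEAB, add_zero]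
  have hD₁ : ∫ ω, (min (A ω * B ω) c - min (B ω) c) ∂μ = a * b - b - X + (q - c * p) := by
    rw [integral_min_sub_min hABint hB, integral_max_sub_zero_eq_setIntegral_sub hB,
      integral_sub hABint hB, hEAB]
  have hN₂ : ∫ ω, (A ω * B ω - A ω) ∂μ = a * b - a := by rw [integral_sub hABint hA, hEAB]
  have hD₂ : ∫ ω, (A ω * B ω - B ω) ∂μ = a * b - b := by rw [integral_sub hABint hB, hEAB]
  have hX : a * q - c * p ≤ X := by
    have h : ∫ ω in {ω | c < B ω}, (A ω * B ω - c) ∂μ ≤ X :=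
      setIntegral_le_integral_max_zero (hABint.sub (integrable_const c)) _
    have hAq : ∫ ω in {ω | c < B ω}, A ω * B ω ∂μ = a * q :=
      hAB.setIntegral_preimage_mul hA.1 hB.1 measurableSet_Ioi
    rwa [integral_sub hABint.integrableOn integrableOn_const, setIntegral_const, smul_eq_mul,
      mul_comm, hAq] at h
  have hq : a * q ≤ c * b * p := by
    have h := mul_le_mul_of_nonneg_right hcond.le hBc.le
    rwa [mul_assoc, div_mul_cancel₀ _ hBc.ne'] at h
  have ha : 1 ≤ a := by simpa using integral_mono_ae (integrable_const 1) hA hA1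
  have hab : a ≤ b := integral_mono_ae hA hB (hAltB.mono fun _ h => h.le)
  rw [ge_iff_le, hN₁, hD₁, hN₂, hD₂]
  exact abc_ratio_le_of_bounds ha hab hX hq (hD₁ ▸ hden1) (hD₂ ▸ hden2)
end

section
/- Let S be a nonnegative random variable with E[S] = 1/μ, and suppose its Laplace transform S̃(s) = E[e^{−sS}] is finite on an interval (−s*, ∞) with s* > 0 and S̃(s) → ∞ as s ↓ −s*. Let 0 < λ < μ. Then there exists a unique θ* ∈ (0, s*) such that S̃(−θ*) = (λ + θ*)/λ, i.e., λ·S̃(−θ*) − λ − θ* = 0. -/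
/-!
In terms of the moment generating function `M θ = E[e^{θS}] = S̃(-θ)`, the equation reads
`g θ = 0` for `g θ = M θ - (1 + θ/λ)`. This `g` is convex on `[0, s*)`, vanishes at `0`, has
derivative `E[S] - 1/λ = 1/μ - 1/λ < 0` there and tends to `∞` at `s*`; so it dips below zero
and the intermediate value theorem gives a zero in `(0, s*)`. Convexity allows only one: once
a convex function has come back up to zero after being negative, it stays positive.
-/

open MeasureTheory Filter Set Topology ProbabilityTheory

lemma HasDerivWithinAt.eventually_lt_of_neg {f : ℝ → ℝ} {f' x : ℝ}
    (hf : HasDerivWithinAt f f' (Ioi x) x) (hf' : f' < 0) : ∀ᶠ y in 𝓝[>] x, f y < f x := by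
  have hslope := (hasDerivWithinAt_iff_tendsto_slope' (lt_irrefl x)).1 hf
  filter_upwards [hslope.eventually_lt_const hf', self_mem_nhdsWithin] with y hy hxy
  rwa [slope_def_field, div_lt_iff₀ (sub_pos.2 hxy), zero_mul, sub_neg] at hy

namespace ConvexOn

variable {s : Set ℝ} {g : ℝ → ℝ} {a c : ℝ}

lemma apply_pos_of_root_lt (hg : ConvexOn ℝ s g) {t r y : ℝ} (ha : a ∈ s) (ht : t ∈ s)
    (hy : y ∈ s) (hga : g a = 0) (hgt : g t < 0) (har : a < r) (hgr : g r = 0) (hry : r < y) :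
    0 < g y := by
  have htr : t < r := by
    by_contra! hrt
    obtain rfl | hrt := hrt.eq_or_lt
    · linarith
    have := hg.lt_left_of_right_lt ha ht (Ioo_subset_openSegment ⟨har, hrt⟩) (by rwa [hgr])
    linarith
  have := hg.lt_right_of_left_lt ht hy (Ioo_subset_openSegment ⟨htr, hry⟩) (by rwa [hgr])
  linarith

lemma existsUnique_root_Ioo (hg : ConvexOn ℝ (Ico a c) g) (hac : a < c) (hga : g a = 0)
    {g' : ℝ} (hderiv : HasDerivWithinAt g g' (Ioi a) a) (hg' : g' < 0)
    (htop : Tendsto g (𝓝[<] c) atTop) : ∃! r, r ∈ Ioo a c ∧ g r = 0 := by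
  obtain ⟨t, hgt, htc⟩ := ((hderiv.eventually_lt_of_neg hg').and (Ioo_mem_nhdsGT hac)).exists
  rw [hga] at hgt
  obtain ⟨b, hgb, hbt⟩ := ((htop.eventually_gt_atTop 0).and (Ioo_mem_nhdsLT htc.2)).exists
  have hcont : ContinuousOn g (Icc t b) := by
    refine hg.continuousOn_interior.mono ?_
    rw [interior_Ico]
    exact Icc_subset_Ioo htc.1 hbt.2
  obtain ⟨r, hrtb, hgr⟩ := intermediate_value_Ioo hbt.1.le hcont ⟨hgt, hgb⟩
  have hr : r ∈ Ioo a c := ⟨htc.1.trans hrtb.1, hrtb.2.trans hbt.2⟩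
  refine ⟨r, ⟨hr, hgr⟩, fun r' ⟨hr', hgr'⟩ ↦ ?_⟩
  have ha : a ∈ Ico a c := left_mem_Ico.2 hac
  have ht : t ∈ Ico a c := Ioo_subset_Ico_self htc
  have no_two_roots : ∀ x ∈ Ioo a c, ∀ y ∈ Ioo a c, g x = 0 → g y = 0 → ¬x < y :=
    fun x hx y hy hgx hgy hxy ↦ (hg.apply_pos_of_root_lt ha ht (Ioo_subset_Ico_self hy) hga
      hgt hx.1 hgx hxy).ne' hgy
  exact le_antisymm (not_lt.1 (no_two_roots r hr r' hr' hgr hgr'))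
    (not_lt.1 (no_two_roots r' hr' r hr hgr' hgr))

end ConvexOn

namespace ProbabilityTheory

variable {Ω : Type*} [MeasurableSpace Ω] {X : Ω → ℝ} {μ : Measure Ω}

lemma convexOn_mgf : ConvexOn ℝ (integrableExpSet X μ) (mgf X μ) := by
  refine ⟨convex_integrableExpSet, fun x hx y hy a b ha hb hab ↦ ?_⟩
  have hxy : a • x + b • y ∈ integrableExpSet X μ := convex_integrableExpSet hx hy ha hb hab
  calc mgf X μ (a • x + b • y)
      ≤ ∫ ω, (a * Real.exp (x * X ω) + b * Real.exp (y * X ω)) ∂μ := by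
        refine integral_mono hxy ((hx.const_mul a).add (hy.const_mul b)) fun ω ↦ ?_
        simpa [add_mul, mul_assoc] using
          convexOn_exp.2 (mem_univ (x * X ω)) (mem_univ (y * X ω)) ha hb hab
    _ = a • mgf X μ x + b • mgf X μ y := by
        rw [integral_add (hx.const_mul a) (hy.const_mul b), integral_const_mul,
          integral_const_mul]
        rfl

lemma existsUnique_mgf_eq_one_add_mul [IsProbabilityMeasure μ] {c k : ℝ} (hc : 0 < c)
    (hint : Iio c ⊆ integrableExpSet X μ) (htop : Tendsto (mgf X μ) (𝓝[<] c) atTop)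
    (hk : μ[X] < k) : ∃! θ, θ ∈ Ioo 0 c ∧ mgf X μ θ = 1 + k * θ := by
  set g : ℝ → ℝ := fun θ ↦ mgf X μ θ - (1 + k * θ)
  have hconv : ConvexOn ℝ (Ico 0 c) g :=
    (convexOn_mgf.subset (Ico_subset_Iio_self.trans hint) (convex_Ico 0 c)).sub
      ((concaveOn_const 1 (convex_Ico 0 c)).add
        ((LinearMap.mul ℝ ℝ k).concaveOn (convex_Ico 0 c)))
  have hzero : (0 : ℝ) ∈ interior (integrableExpSet X μ) :=
    interior_mono hint (by simpa [interior_Iio] using hc)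
  have hderiv : HasDerivAt g (μ[X] - k) 0 :=
    ((hasDerivAt_mgf hzero).sub (((hasDerivAt_id (0 : ℝ)).const_mul k).const_add 1)).congr_deriv
      (by simp)
  have hline : Tendsto (fun θ : ℝ ↦ -(1 + k * θ)) (𝓝[<] c) (𝓝 (-(1 + k * c))) :=
    ((tendsto_const_nhds.mul tendsto_id).const_add 1).neg.mono_left nhdsWithin_le_nhds
  have hgtop : Tendsto g (𝓝[<] c) atTop := by
    simpa only [g, sub_eq_add_neg] using htop.atTop_add hline
  simp_rw [← sub_eq_zero (a := mgf X μ _)]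
  exact hconv.existsUnique_root_Ioo hc (by simp [g]) hderiv.hasDerivWithinAt (sub_neg.2 hk) hgtop

end ProbabilityTheory

theorem exists_unique_decay_rate_general {Ω : Type*} [MeasurableSpace Ω] (P : Measure Ω)
    [IsProbabilityMeasure P] (S : Ω → ℝ)
    (μ lam sstar : ℝ) (hlam : 0 < lam) (hlamμ : lam < μ) (hsstar : 0 < sstar)
    (hmean : ∫ ω, S ω ∂P = 1 / μ)
    (hfin : ∀ s : ℝ, -sstar < s → Integrable (fun ω => Real.exp (-(s * S ω))) P)
    (hblow : Filter.Tendsto (fun s : ℝ => ∫ ω, Real.exp (-(s * S ω)) ∂P)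
      (nhdsWithin (-sstar) (Set.Ioi (-sstar))) Filter.atTop) :
    ∃! θ : ℝ, θ ∈ Set.Ioo 0 sstar ∧
      (∫ ω, Real.exp (-(-θ * S ω)) ∂P) = (lam + θ) / lam := by
  have hint : Iio sstar ⊆ integrableExpSet S P := fun θ hθ ↦ by
    simpa [integrableExpSet] using hfin (-θ) (neg_lt_neg hθ)
  have htop : Tendsto (mgf S P) (𝓝[<] sstar) atTop :=
    (hblow.comp tendsto_neg_nhdsLT).congr fun θ ↦ by simp [mgf]
  have hk : P[S] < 1 / lam := hmean ▸ one_div_lt_one_div_of_lt hlam hlamμ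
  have hroot : ∀ θ : ℝ, (∫ ω, Real.exp (-(-θ * S ω)) ∂P) = (lam + θ) / lam ↔
      mgf S P θ = 1 + 1 / lam * θ := fun θ ↦ by
    rw [show (lam + θ) / lam = 1 + 1 / lam * θ by field_simp]
    simp [mgf]
  simp_rw [hroot]
  exact existsUnique_mgf_eq_one_add_mul hsstar hint htop hk

/-- Existence and uniqueness of the asymptotic decay rate `θ*`:
if `S ≥ 0` has `E[S] = 1/μ`, its Laplace transform `L(s) = E[e^{−sS}]` is finite on
`(−s*, ∞)` and blows up as `s ↓ −s*`, and `0 < λ < μ`, then there is a unique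
`θ* ∈ (0, s*)` with `L(−θ*) = (λ + θ*)/λ`. -/
theorem exists_unique_decay_rate {Ω : Type*} [MeasurableSpace Ω] (P : Measure Ω)
    [IsProbabilityMeasure P] (S : Ω → ℝ) (hS : Measurable S) (hSpos : ∀ᵐ ω ∂P, 0 ≤ S ω)
    (μ lam sstar : ℝ) (hμ : 0 < μ) (hlam : 0 < lam) (hlamμ : lam < μ) (hsstar : 0 < sstar)
    (hmean : ∫ ω, S ω ∂P = 1 / μ)
    (hfin : ∀ s : ℝ, -sstar < s → Integrable (fun ω => Real.exp (-(s * S ω))) P)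
    (hblow : Filter.Tendsto (fun s : ℝ => ∫ ω, Real.exp (-(s * S ω)) ∂P)
      (nhdsWithin (-sstar) (Set.Ioi (-sstar))) Filter.atTop) :
    ∃! θ : ℝ, θ ∈ Set.Ioo 0 sstar ∧
      (∫ ω, Real.exp (-(-θ * S ω)) ∂P) = (lam + θ) / lam :=
  exists_unique_decay_rate_general P S μ lam sstar hlam hlamμ hsstar hmean hfin hblow
end

section
/- Suppose a probability density f on [0,∞) satisfies f(0) = (1−ρ)λ > 0 and the integro-differential equation f′(t) = λ f(t) − (1−ρ)λ f_S(t) − λ ∫₀^t f(t−j) f_S(j) dj for all t > 0, where f_S is a continuous probability density on [0,∞), 0 < ρ < 1, λ > 0, and f is continuously differentiable. Then f(t) > 0 for all t ≥ 0. -/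
open MeasureTheory Set intervalIntegral

/-- Strict positivity of the FCFS waiting-time density: if a continuously differentiable
probability density `f` on `[0,∞)` satisfies `f 0 = (1−ρ)λ > 0` and the level-crossing
equation `f′(t) = λ f(t) − (1−ρ)λ f_S(t) − λ ∫₀^t f(t−j) f_S(j) dj` for `t > 0`,
where `f_S` is a continuous probability density on `[0,∞)`, then `f(t) > 0` for all
`t ≥ 0`. -/
theorem waiting_time_density_pos (f fS : ℝ → ℝ) (lam ρ : ℝ)
    (hlam : 0 < lam) (hρ0 : 0 < ρ) (hρ1 : ρ < 1)
    (hfS_cont : Continuous fS) (hfS_nonneg : ∀ t, 0 ≤ fS t)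
    (hfS_density : ∫ t in Ici (0 : ℝ), fS t = 1)
    (hf_nonneg : ∀ t, 0 ≤ f t)
    (hf_density : ∫ t in Ici (0 : ℝ), f t = 1)
    (hf_diff : Differentiable ℝ f) (hf_deriv_cont : Continuous (deriv f))
    (hf0 : f 0 = (1 - ρ) * lam)
    (heq : ∀ t > 0, deriv f t =
      lam * f t - (1 - ρ) * lam * fS t - lam * ∫ j in (0:ℝ)..t, f (t - j) * fS j) :
    ∀ t ≥ 0, 0 < f t := by
  have hf_cont : Continuous f := hf_diff.continuous
  have hf0pos : 0 < f 0 := by rw [hf0]; nlinarith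
  by_contra h
  push_neg at h
  obtain ⟨t₁, ht₁0, ht₁⟩ := h
  have ht₁z : f t₁ = 0 := le_antisymm ht₁ (hf_nonneg t₁)
  -- the set of zeros in [0,∞)
  set Z : Set ℝ := {t | 0 ≤ t ∧ f t = 0} with hZ
  have hZne : Z.Nonempty := ⟨t₁, ht₁0, ht₁z⟩
  have hZclosed : IsClosed Z := by
    have : Z = Ici (0:ℝ) ∩ f ⁻¹' {0} := by ext t; simp [hZ, mem_Ici]
    rw [this]
    exact isClosed_Ici.inter (isClosed_singleton.preimage hf_cont)
  have hZbdd : BddBelow Z := ⟨0, fun x hx => hx.1⟩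
  set t₀ := sInf Z with ht₀def
  have ht₀mem : t₀ ∈ Z := hZclosed.csInf_mem hZne hZbdd
  have ht₀0 : 0 ≤ t₀ := ht₀mem.1
  have ht₀z : f t₀ = 0 := ht₀mem.2
  have ht₀pos : 0 < t₀ := by
    rcases ht₀0.lt_or_eq with h | h
    · exact h
    · exfalso; rw [← h] at ht₀z; rw [ht₀z] at hf0pos; exact lt_irrefl 0 hf0pos
  -- f is strictly positive on [0, t₀)
  have hfpos : ∀ t, 0 ≤ t → t < t₀ → 0 < f t := by
    intro t ht0 htlt
    rcases (hf_nonneg t).lt_or_eq with h | h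
    · exact h
    · exfalso
      have : t ∈ Z := ⟨ht0, h.symm⟩
      exact absurd (csInf_le hZbdd this) (not_le.mpr htlt)
  -- t₀ is a global min of f, so deriv f t₀ = 0
  have hderiv0 : deriv f t₀ = 0 := by
    apply IsLocalMin.deriv_eq_zero
    exact Filter.Eventually.of_forall (fun t => by rw [ht₀z]; exact hf_nonneg t)
  -- the convolution integral at t₀
  set I := ∫ j in (0:ℝ)..t₀, f (t₀ - j) * fS j with hIdef
  have hInonneg : 0 ≤ I :=
    intervalIntegral.integral_nonneg ht₀pos.le
      (fun j _ => mul_nonneg (hf_nonneg _) (hfS_nonneg _))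
  have heqt₀ := heq t₀ ht₀pos
  rw [hderiv0, ht₀z] at heqt₀
  -- both nonneg terms sum to 0
  have hfSt₀ : fS t₀ = 0 := by nlinarith [hfS_nonneg t₀]
  have hI0 : I = 0 := by nlinarith [hfS_nonneg t₀]
  -- claim A : fS vanishes on (0, t₀)
  have hA : ∀ j, 0 < j → j < t₀ → fS j = 0 := by
    intro j hj0 hjt
    by_contra hne
    have hjpos : 0 < fS j := (hfS_nonneg j).lt_of_ne (Ne.symm hne)
    set g : ℝ → ℝ := fun x => f (t₀ - x) * fS x with hg
    have hg_cont : Continuous g := (hf_cont.comp (continuous_const.sub continuous_id)).mul hfS_cont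
    have hg_nonneg : ∀ x, 0 ≤ g x := fun x => mul_nonneg (hf_nonneg _) (hfS_nonneg _)
    have hgj : 0 < g j := mul_pos (hfpos (t₀ - j) (by linarith) (by linarith)) hjpos
    have hopen : IsOpen {x | 0 < g x} := isOpen_lt continuous_const hg_cont
    obtain ⟨ε, hε, hball⟩ := Metric.isOpen_iff.mp hopen j hgj
    rw [Real.ball_eq_Ioo] at hball
    set a := max (j - ε/2) (j/2) with ha
    set b := min (j + ε/2) ((j + t₀)/2) with hb
    have ha0 : 0 ≤ a := le_trans (by linarith) (le_max_right _ _)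
    have haj : a < j := max_lt (by linarith) (by linarith)
    have hjb : j < b := lt_min (by linarith) (by linarith)
    have hbt₀ : b ≤ t₀ := le_trans (min_le_right _ _) (by linarith)
    have hsub : Ioo a b ⊆ {x | 0 < g x} := by
      intro x hx
      apply hball
      constructor
      · have := le_max_left (j - ε/2) (j/2); linarith [hx.1]
      · have := min_le_left (j + ε/2) ((j + t₀)/2); linarith [hx.2]
    have hi1 : IntervalIntegrable g volume 0 a := hg_cont.intervalIntegrable _ _
    have hi2 : IntervalIntegrable g volume a b := hg_cont.intervalIntegrable _ _
    have hi3 : IntervalIntegrable g volume b t₀ := hg_cont.intervalIntegrable _ _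
    have hsplit : (∫ x in (0:ℝ)..a, g x) + (∫ x in a..b, g x) + (∫ x in b..t₀, g x) = I := by
      rw [hIdef]
      rw [intervalIntegral.integral_add_adjacent_intervals hi1 hi2]
      exact intervalIntegral.integral_add_adjacent_intervals
        ((hg_cont.intervalIntegrable _ _)) hi3
    have h1 : 0 ≤ ∫ x in (0:ℝ)..a, g x :=
      intervalIntegral.integral_nonneg ha0 (fun x _ => hg_nonneg x)
    have h3 : 0 ≤ ∫ x in b..t₀, g x :=
      intervalIntegral.integral_nonneg hbt₀ (fun x _ => hg_nonneg x)
    have h2 : 0 < ∫ x in a..b, g x :=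
      intervalIntegral.intervalIntegral_pos_of_pos_on hi2 (fun x hx => hsub hx) (haj.trans hjb)
    linarith [hsplit, hI0]
  -- fS 0 = 0 by continuity
  have hfS0 : fS 0 = 0 := by
    have hne : (nhdsWithin (0:ℝ) (Ioo 0 t₀)).NeBot := by
      rw [← mem_closure_iff_nhdsWithin_neBot, closure_Ioo (ne_of_lt ht₀pos)]
      exact ⟨le_refl 0, ht₀pos.le⟩
    have h1 : Filter.Tendsto fS (nhdsWithin 0 (Ioo 0 t₀)) (nhds (fS 0)) :=
      (hfS_cont.tendsto 0).mono_left nhdsWithin_le_nhds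
    have h2 : Filter.Tendsto fS (nhdsWithin 0 (Ioo 0 t₀)) (nhds 0) := by
      apply Filter.Tendsto.congr' _ tendsto_const_nhds
      filter_upwards [self_mem_nhdsWithin] with x hx
      exact (hA x hx.1 hx.2).symm
    exact tendsto_nhds_unique h1 h2
  -- fS vanishes on [0, t₀]
  have hfS_zero : ∀ j, 0 ≤ j → j ≤ t₀ → fS j = 0 := by
    intro j hj0 hjt
    rcases hj0.lt_or_eq with h0 | h0
    · rcases hjt.lt_or_eq with h1 | h1
      · exact hA j h0 h1
      · rw [h1]; exact hfSt₀
    · rw [← h0]; exact hfS0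
  -- on (0, t₀), f satisfies f' = λ f
  have hODE : ∀ t ∈ Ioo (0:ℝ) t₀, deriv f t = lam * f t := by
    intro t ht
    have hint : (∫ j in (0:ℝ)..t, f (t - j) * fS j) = 0 := by
      rw [intervalIntegral.integral_congr (g := fun _ => (0:ℝ))]
      · simp
      · intro j hj
        rw [uIcc_of_le ht.1.le] at hj
        have : fS j = 0 := hfS_zero j hj.1 (le_trans hj.2 ht.2.le)
        simp [this]
    rw [heq t ht.1, hint, hfS_zero t ht.1.le ht.2.le]
    ring
  -- consider g t = f t * exp(-λ t); it has zero derivative on (0,t₀)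
  set G : ℝ → ℝ := fun t => f t * Real.exp (-lam * t) with hG
  have hGderiv : ∀ t, HasDerivAt G
      (deriv f t * Real.exp (-lam * t) + f t * (Real.exp (-lam * t) * (-lam))) t := by
    intro t
    have h1 : HasDerivAt (fun x : ℝ => -lam * x) (-lam) t := by
      simpa using (hasDerivAt_id t).const_mul (-lam)
    exact ((hf_diff t).hasDerivAt).mul h1.exp
  have hGdiff : Differentiable ℝ G := fun t => (hGderiv t).differentiableAt
  have hGderiv0 : ∀ t ∈ interior (Icc (0:ℝ) t₀), deriv G t = 0 := by
    intro t ht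
    rw [interior_Icc] at ht
    rw [(hGderiv t).deriv, hODE t ht]
    ring
  have hGcont : ContinuousOn G (Icc 0 t₀) := hGdiff.continuous.continuousOn
  have hGdiffOn : DifferentiableOn ℝ G (interior (Icc (0:ℝ) t₀)) :=
    hGdiff.differentiableOn
  have hmono : MonotoneOn G (Icc 0 t₀) :=
    monotoneOn_of_deriv_nonneg (convex_Icc 0 t₀) hGcont hGdiffOn
      (fun x hx => le_of_eq (hGderiv0 x hx).symm)
  have hanti : AntitoneOn G (Icc 0 t₀) :=
    antitoneOn_of_deriv_nonpos (convex_Icc 0 t₀) hGcont hGdiffOn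
      (fun x hx => le_of_eq (hGderiv0 x hx))
  have h0mem : (0:ℝ) ∈ Icc (0:ℝ) t₀ := ⟨le_refl 0, ht₀pos.le⟩
  have ht₀memI : t₀ ∈ Icc (0:ℝ) t₀ := ⟨ht₀pos.le, le_refl t₀⟩
  have hGeq : G t₀ = G 0 :=
    le_antisymm (hanti h0mem ht₀memI ht₀pos.le) (hmono h0mem ht₀memI ht₀pos.le)
  have hG0 : 0 < G 0 := by
    simp only [hG]
    have : Real.exp (-lam * 0) = 1 := by norm_num
    rw [this, mul_one]
    exact hf0pos
  have hGt₀ : G t₀ = 0 := by simp [hG, ht₀z]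
  rw [hGeq] at hGt₀
  linarith
end

section
/- Let W be a nonnegative random variable with density f_W satisfying f_W(w) ≥ g_min·e^{−θ* w} for all w ≥ 0, where g_min, θ* > 0. Let X, Y be nonnegative random variables and A ~ Exp(λ), all mutually independent and independent of W. Then P(A + (t − X − Y)⁺ ≤ W ≤ A + (t − X)⁺) ≥ (g_min·(λ/(λ+θ*))·e^{−θ* t}/θ*)·E[e^{θ* min(t, X+Y)} − e^{θ* min(t, X)}] for every t ≥ 0. -/
/-! Split the variables into the independent pairs `(W, A)` and `(X, Y)`. Given `(X, Y) = (x, y)`,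
the event is `A + l ≤ W ≤ A + u` with `l = (t - x - y)⁺` and `u = (t - x)⁺`. Since `A ≥ 0`,
integrating the density bound of `W` over `[a + l, a + u]` gives
`g_min e^{-θa} (e^{-θl} - e^{-θu}) / θ`, and averaging over `A ~ Exp(λ)` contributes the factor
`E[e^{-θA}] = λ / (λ + θ)`. Finally `e^{-θ (t - s)⁺} = e^{-θt} e^{θ min(t, s)}`.

Each passage from a Bochner to a lower Lebesgue integral uses `ofReal (∫ f) ≤ ∫⁻ ofReal f`, which
holds without integrability or sign conditions. -/

open MeasureTheory ProbabilityTheory Set Real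

lemma ofReal_integral_le_lintegral_ofReal {α : Type*} [MeasurableSpace α] {μ : Measure α}
    (f : α → ℝ) : ENNReal.ofReal (∫ x, f x ∂μ) ≤ ∫⁻ x, ENNReal.ofReal (f x) ∂μ := by
  by_cases hf : Integrable f μ
  · rw [integral_eq_lintegral_pos_part_sub_lintegral_neg_part hf]
    exact (ENNReal.ofReal_le_ofReal (sub_le_self _ ENNReal.toReal_nonneg)).trans
      ENNReal.ofReal_toReal_le
  · simp [integral_undef hf]

lemma ProbabilityTheory.IndepFun.measure_preimage_eq_lintegral {Ω β γ : Type*}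
    [MeasurableSpace Ω] [MeasurableSpace β] [MeasurableSpace γ] {μ : Measure Ω}
    [IsFiniteMeasure μ] {U : Ω → β} {V : Ω → γ} (hUV : IndepFun U V μ)
    (hU : AEMeasurable U μ) (hV : AEMeasurable V μ) {s : Set (β × γ)} (hs : MeasurableSet s) :
    μ ((fun ω => (U ω, V ω)) ⁻¹' s) = ∫⁻ ω, μ.map U ((fun u => (u, V ω)) ⁻¹' s) ∂μ := by
  rw [← Measure.map_apply_of_aemeasurable (hU.prodMk hV) hs,
    (indepFun_iff_map_prod_eq_prod_map_map hU hV).1 hUV, Measure.prod_apply_symm hs,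
    lintegral_map' (measurable_measure_prodMk_right hs).aemeasurable hV]

lemma exp_neg_mul_max_sub (θ t s : ℝ) :
    exp (-(θ * max (t - s) 0)) = exp (-(θ * t)) * exp (θ * min t s) := by
  rw [← exp_add]
  congr 1
  rcases le_total s t with h | h
  · rw [max_eq_left (sub_nonneg.2 h), min_eq_right h]; ring
  · rw [max_eq_right (sub_nonpos.2 h), min_eq_left h]; ring

lemma integral_Icc_exp_neg_mul {θ l u : ℝ} (hθ : θ ≠ 0) (hlu : l ≤ u) :
    ∫ w in Icc l u, exp (-(θ * w)) = (exp (-(θ * l)) - exp (-(θ * u))) / θ := by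
  rw [integral_Icc_eq_integral_Ioc, ← intervalIntegral.integral_of_le hlu]
  simp only [← neg_mul]
  rw [intervalIntegral.integral_comp_mul_left (fun x => exp x) (neg_ne_zero.2 hθ), integral_exp,
    smul_eq_mul, inv_neg]
  field_simp
  ring

lemma ae_nonneg_expMeasure (r : ℝ) : ∀ᵐ a ∂expMeasure r, 0 ≤ a := by
  simp only [ae_iff, not_le]
  show (volume.withDensity (gammaPDF 1 r)) (Iio 0) = 0
  rw [withDensity_apply _ measurableSet_Iio]
  exact lintegral_gammaPDF_of_nonpos le_rfl

lemma integral_exp_neg_mul_expMeasure {r θ : ℝ} (hr : 0 < r) (hθ : -r < θ) :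
    ∫ a, exp (-(θ * a)) ∂expMeasure r = r / (r + θ) := by
  rw [expMeasure, gammaMeasure, integral_withDensity_eq_integral_toReal_smul (f := gammaPDF 1 r)
    (measurable_gammaPDFReal 1 r).ennreal_ofReal (.of_forall fun _ => ENNReal.ofReal_lt_top)]
  have hdens : (fun a => (exponentialPDF r a).toReal • exp (-(θ * a)))
      = (Ici 0).indicator (fun a => r * exp (-(r + θ) * a)) := by
    ext a
    by_cases ha : a ∈ Ici 0
    · rw [exponentialPDF_of_nonneg ha, indicator_of_mem ha,
        ENNReal.toReal_ofReal (by positivity), smul_eq_mul, mul_assoc, ← exp_add]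
      ring_nf
    · rw [exponentialPDF_of_neg (by simpa using ha), indicator_of_notMem ha]
      simp
  rw [show gammaPDF 1 r = exponentialPDF r from rfl, hdens, integral_indicator measurableSet_Ici,
    integral_Ici_eq_integral_Ioi, integral_const_mul, integral_exp_mul_Ioi (by linarith) 0]
  field_simp
  simp

lemma ofReal_le_withDensity_Icc {f : ℝ → ℝ} {c θ l u : ℝ} (hc : 0 ≤ c) (hθ : 0 < θ)
    (hf : ∀ w ≥ 0, c * exp (-(θ * w)) ≤ f w) (hl : 0 ≤ l) :
    ENNReal.ofReal (c / θ * (exp (-(θ * l)) - exp (-(θ * u)))) ≤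
      volume.withDensity (fun w => ENNReal.ofReal (f w)) (Icc l u) := by
  rcases le_or_gt l u with hlu | hul
  · calc ENNReal.ofReal (c / θ * (exp (-(θ * l)) - exp (-(θ * u))))
          = ENNReal.ofReal (∫ w in Icc l u, c * exp (-(θ * w))) := by
            rw [integral_const_mul, integral_Icc_exp_neg_mul hθ.ne' hlu, mul_div_assoc',
              div_mul_eq_mul_div]
        _ ≤ ∫⁻ w in Icc l u, ENNReal.ofReal (c * exp (-(θ * w))) :=
            ofReal_integral_le_lintegral_ofReal _
        _ ≤ ∫⁻ w in Icc l u, ENNReal.ofReal (f w) := setLIntegral_mono' measurableSet_Icc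
            fun w hw => ENNReal.ofReal_le_ofReal (hf w (hl.trans hw.1))
        _ = _ := (withDensity_apply _ measurableSet_Icc).symm
  · have : c / θ * (exp (-(θ * l)) - exp (-(θ * u))) ≤ 0 :=
      mul_nonpos_of_nonneg_of_nonpos (by positivity)
        (sub_nonpos.2 (exp_le_exp.2 (by nlinarith)))
    simp [ENNReal.ofReal_eq_zero.2 this]

lemma ofReal_le_prod_expMeasure_Icc_add {ν : Measure ℝ} [SFinite ν] {c θ r l u : ℝ}
    (hr : 0 < r) (hθ : 0 < θ)
    (hν : ∀ l u, 0 ≤ l → ENNReal.ofReal (c / θ * (exp (-(θ * l)) - exp (-(θ * u)))) ≤ ν (Icc l u))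
    (hl : 0 ≤ l) :
    ENNReal.ofReal (c * (r / (r + θ)) / θ * (exp (-(θ * l)) - exp (-(θ * u)))) ≤
      (ν.prod (expMeasure r)) {p | p.2 + l ≤ p.1 ∧ p.1 ≤ p.2 + u} := by
  have hS : MeasurableSet {p : ℝ × ℝ | p.2 + l ≤ p.1 ∧ p.1 ≤ p.2 + u} :=
    (measurableSet_le (measurable_snd.add_const l) measurable_fst).inter
      (measurableSet_le measurable_fst (measurable_snd.add_const u))
  have := isProbabilityMeasure_expMeasure hr
  set D := exp (-(θ * l)) - exp (-(θ * u))
  rw [Measure.prod_apply_symm hS]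
  calc ENNReal.ofReal (c * (r / (r + θ)) / θ * D)
        = ENNReal.ofReal (∫ a, c / θ * D * exp (-(θ * a)) ∂expMeasure r) := by
          rw [integral_const_mul, integral_exp_neg_mul_expMeasure hr (by linarith)]
          ring_nf
      _ ≤ ∫⁻ a, ENNReal.ofReal (c / θ * D * exp (-(θ * a))) ∂expMeasure r :=
          ofReal_integral_le_lintegral_ofReal _
      _ ≤ ∫⁻ a, ν (Icc (a + l) (a + u)) ∂expMeasure r := by
          refine lintegral_mono_ae ((ae_nonneg_expMeasure r).mono fun a ha => ?_)
          convert hν (a + l) (a + u) (by linarith) using 2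
          simp only [D, mul_add, neg_add, exp_add]
          ring
      _ = _ := rfl

lemma ofReal_integral_le_measure_of_indepFun_expMeasure {Ω γ : Type*} [MeasurableSpace Ω]
    [MeasurableSpace γ] {μ : Measure Ω} [IsFiniteMeasure μ] {W A : Ω → ℝ} {V : Ω → γ}
    {ν : Measure ℝ} [SFinite ν] {c θ r : ℝ} {l u : γ → ℝ} (hr : 0 < r) (hθ : 0 < θ)
    (hν : ∀ l u, 0 ≤ l → ENNReal.ofReal (c / θ * (exp (-(θ * l)) - exp (-(θ * u)))) ≤ ν (Icc l u))
    (hl : ∀ v, 0 ≤ l v) (hl_meas : Measurable l) (hu_meas : Measurable u)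
    (hWA_V : IndepFun (fun ω => (W ω, A ω)) V μ) (hWA : AEMeasurable (fun ω => (W ω, A ω)) μ)
    (hV : AEMeasurable V μ) (hlaw : μ.map (fun ω => (W ω, A ω)) = ν.prod (expMeasure r)) :
    ENNReal.ofReal (∫ ω, c * (r / (r + θ)) / θ *
        (exp (-(θ * l (V ω))) - exp (-(θ * u (V ω)))) ∂μ) ≤
      μ {ω | A ω + l (V ω) ≤ W ω ∧ W ω ≤ A ω + u (V ω)} := by
  have hS : MeasurableSet {p : (ℝ × ℝ) × γ | p.1.2 + l p.2 ≤ p.1.1 ∧ p.1.1 ≤ p.1.2 + u p.2} :=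
    (measurableSet_le (by fun_prop) measurable_fst.fst).inter
      (measurableSet_le measurable_fst.fst (by fun_prop))
  calc _ ≤ ∫⁻ ω, ENNReal.ofReal (c * (r / (r + θ)) / θ *
        (exp (-(θ * l (V ω))) - exp (-(θ * u (V ω))))) ∂μ :=
        ofReal_integral_le_lintegral_ofReal _
    _ ≤ ∫⁻ ω, μ.map (fun ω => (W ω, A ω))
        {p | p.2 + l (V ω) ≤ p.1 ∧ p.1 ≤ p.2 + u (V ω)} ∂μ := by
        refine lintegral_mono fun ω => ?_
        rw [hlaw]
        exact ofReal_le_prod_expMeasure_Icc_add hr hθ hν (hl _)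
    _ = _ := (hWA_V.measure_preimage_eq_lintegral hWA hV hS).symm

theorem decrease_prob_lower_bound_general {Ω : Type*} [MeasurableSpace Ω] (μ : Measure Ω)
    [IsProbabilityMeasure μ] (W X Y A : Ω → ℝ) (fW : ℝ → ℝ) (gmin θ lam : ℝ)
    (hgmin : 0 < gmin) (hθ : 0 < θ) (hlam : 0 < lam)
    (hW : Measurable W) (hX : Measurable X) (hY : Measurable Y)
    (hdensity : Measure.map W μ =
      MeasureTheory.volume.withDensity (fun w => ENNReal.ofReal (fW w)))
    (hfW_bound : ∀ w ≥ 0, gmin * Real.exp (-(θ * w)) ≤ fW w)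
    (hA : Measure.map A μ = expMeasure lam)
    (hindep : iIndepFun ![W, X, Y, A] μ)
    (t : ℝ) :
    (μ {ω | A ω + max (t - X ω - Y ω) 0 ≤ W ω ∧ W ω ≤ A ω + max (t - X ω) 0}).toReal ≥
      gmin * (lam / (lam + θ)) * Real.exp (-(θ * t)) / θ *
        ∫ ω, (Real.exp (θ * min t (X ω + Y ω)) - Real.exp (θ * min t (X ω))) ∂μ := by
  have := isProbabilityMeasure_expMeasure hlam
  have hAm : AEMeasurable A μ := aemeasurable_of_map_neZero (by rw [hA]; infer_instance)
  have hWA_XY : IndepFun (fun ω => (W ω, A ω)) (fun ω => (X ω, Y ω)) μ := by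
    refine hindep.indepFun_prodMk_prodMk₀ (fun i => ?_) 0 3 1 2 (by decide) (by decide)
      (by decide) (by decide)
    fin_cases i
    exacts [hW.aemeasurable, hX.aemeasurable, hY.aemeasurable, hAm]
  have hWA : μ.map (fun ω => (W ω, A ω)) =
      (volume.withDensity fun w => ENNReal.ofReal (fW w)).prod (expMeasure lam) := by
    rw [← hdensity, ← hA]
    exact (indepFun_iff_map_prod_eq_prod_map_map hW.aemeasurable hAm).1
      (hindep.indepFun (i := 0) (j := 3) (by decide))
  have hintegral : gmin * (lam / (lam + θ)) * Real.exp (-(θ * t)) / θ *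
        ∫ ω, (Real.exp (θ * min t (X ω + Y ω)) - Real.exp (θ * min t (X ω))) ∂μ =
      ∫ ω, gmin * (lam / (lam + θ)) / θ *
        (Real.exp (-(θ * max (t - X ω - Y ω) 0)) - Real.exp (-(θ * max (t - X ω) 0))) ∂μ := by
    rw [← integral_const_mul]
    congr 1 with ω
    rw [sub_sub, exp_neg_mul_max_sub, exp_neg_mul_max_sub]
    ring
  rw [ge_iff_le, ← ENNReal.ofReal_le_iff_le_toReal (measure_ne_top _ _), hintegral]
  exact ofReal_integral_le_measure_of_indepFun_expMeasure (V := fun ω => (X ω, Y ω))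
    (l := fun v => max (t - v.1 - v.2) 0) (u := fun v => max (t - v.1) 0) hlam hθ
    (fun _ _ hl => ofReal_le_withDensity_Icc hgmin.le hθ hfW_bound hl) (fun _ => le_max_right _ _)
    (by fun_prop) (by fun_prop) hWA_XY (hW.aemeasurable.prodMk hAm)
    (hX.aemeasurable.prodMk hY.aemeasurable) hWA

/-- Lower bound on the decrease probability: if `W` has a density `fW` with
`fW(w) ≥ g_min·e^{−θ w}` for `w ≥ 0`, `X, Y ≥ 0`, and `A ~ Exp(λ)`, all mutually
independent, then for all `t ≥ 0`,
`P(A + (t−X−Y)⁺ ≤ W ≤ A + (t−X)⁺) ≥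
  (g_min (λ/(λ+θ)) e^{−θ t}/θ)·E[e^{θ min(t,X+Y)} − e^{θ min(t,X)}]`. -/
theorem decrease_prob_lower_bound {Ω : Type*} [MeasurableSpace Ω] (μ : Measure Ω)
    [IsProbabilityMeasure μ] (W X Y A : Ω → ℝ) (fW : ℝ → ℝ) (gmin θ lam : ℝ)
    (hgmin : 0 < gmin) (hθ : 0 < θ) (hlam : 0 < lam)
    (hW : Measurable W) (hX : Measurable X) (hY : Measurable Y)
    (hXpos : ∀ᵐ ω ∂μ, 0 ≤ X ω) (hYpos : ∀ᵐ ω ∂μ, 0 ≤ Y ω)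
    (hdensity : Measure.map W μ =
      MeasureTheory.volume.withDensity (fun w => ENNReal.ofReal (fW w)))
    (hfW_neg : ∀ w < 0, fW w = 0)
    (hfW_bound : ∀ w ≥ 0, gmin * Real.exp (-(θ * w)) ≤ fW w)
    (hA : Measure.map A μ = expMeasure lam)
    (hindep : iIndepFun ![W, X, Y, A] μ)
    (t : ℝ) (ht : 0 ≤ t) :
    (μ {ω | A ω + max (t - X ω - Y ω) 0 ≤ W ω ∧ W ω ≤ A ω + max (t - X ω) 0}).toReal ≥
      gmin * (lam / (lam + θ)) * Real.exp (-(θ * t)) / θ *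
        ∫ ω, (Real.exp (θ * min t (X ω + Y ω)) - Real.exp (θ * min t (X ω))) ∂μ :=
  decrease_prob_lower_bound_general μ W X Y A fW gmin θ lam hgmin hθ hlam hW hX hY hdensity
    hfW_bound hA hindep t
end
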